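/- For the 3-tensors D^h(X,Y,Z) = (1/2h)[dh(X)D(Y,Z) + dh(JX)D(JY,Z)] and E^h(X,Y,Z) = (1/2h)[dh(Z)E(X,Y) - dh(JZ)E(X,JY)] built from symmetric 2-tensors D ∈ Ψ_{[-1]} and E ∈ Ψ_{[1]} on a 2n-dimensional Hermitian vector space (H, g, J), the following identity holds: (|∇h|²/(4h))(|D|² + |E|²) = (h/2)|D^h + E^h|² - h·g(d,e), where d(X) = h⁻¹D(X,∇h) and e(X) = h⁻¹E(X,∇h), so that g(d,e) = h⁻²D(∇h,e_a)E(∇h,e_a) summed over an orthonormal basis (e_a). -/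
import Mathlib


open RealInnerProductSpace

private lemma gen_sum {ι : Type*} [Fintype ι] (p₁ p₂ p₃ p₄ q₁ q₂ q₃ q₄ : ι → ℝ) :
    ∑ i, ∑ l, (p₁ i * q₁ l + p₂ i * q₂ l + p₃ i * q₃ l + p₄ i * q₄ l)^2
    = (∑ i, p₁ i * p₁ i) * (∑ l, q₁ l * q₁ l)
    + (∑ i, p₂ i * p₂ i) * (∑ l, q₂ l * q₂ l)
    + (∑ i, p₃ i * p₃ i) * (∑ l, q₃ l * q₃ l)
    + (∑ i, p₄ i * p₄ i) * (∑ l, q₄ l * q₄ l)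
    + 2 * ((∑ i, p₁ i * p₂ i) * (∑ l, q₁ l * q₂ l))
    + 2 * ((∑ i, p₁ i * p₃ i) * (∑ l, q₁ l * q₃ l))
    + 2 * ((∑ i, p₁ i * p₄ i) * (∑ l, q₁ l * q₄ l))
    + 2 * ((∑ i, p₂ i * p₃ i) * (∑ l, q₂ l * q₃ l))
    + 2 * ((∑ i, p₂ i * p₄ i) * (∑ l, q₂ l * q₄ l))
    + 2 * ((∑ i, p₃ i * p₄ i) * (∑ l, q₃ l * q₄ l)) := by
  simp only [Finset.sum_mul_sum]
  simp only [Finset.mul_sum]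
  simp only [← Finset.sum_add_distrib]
  exact Finset.sum_congr rfl fun i _ => Finset.sum_congr rfl fun l _ => by ring

/-- **The key 3-tensor identity of the Jerison–Lee divergence formula.** -/
theorem jerison_lee_three_tensor_identity
    {H : Type*} [NormedAddCommGroup H] [InnerProductSpace ℝ H] (n : ℕ)
    (b : OrthonormalBasis (Fin (2*n)) ℝ H)
    (J : H →ₗ[ℝ] H) (hJ2 : ∀ x : H, J (J x) = -x)
    (hJiso : ∀ x y : H, ⟪J x, J y⟫ = ⟪x, y⟫)
    (D E : H →ₗ[ℝ] H →ₗ[ℝ] ℝ)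
    (hDsymm : ∀ x y : H, D x y = D y x) (hEsymm : ∀ x y : H, E x y = E y x)
    (hDtype : ∀ x y : H, D (J x) (J y) = - D x y)
    (hEtype : ∀ x y : H, E (J x) (J y) = E x y)
    (h : ℝ) (hh : 0 < h) (V : H) :
    (‖V‖^2/(4*h)) * ((∑ i, ∑ j, (D (b i) (b j))^2) + (∑ i, ∑ j, (E (b i) (b j))^2))
      = (h/2) * (∑ i, ∑ j, ∑ l,
            ((1/(2*h)) * (⟪V, b i⟫ * D (b j) (b l) + ⟪V, J (b i)⟫ * D (J (b j)) (b l))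
              + (1/(2*h)) * (⟪V, b l⟫ * E (b i) (b j) - ⟪V, J (b l)⟫ * E (b i) (J (b j))))^2)
        - h * ((1/h^2) * ∑ i, D V (b i) * E V (b i)) := by
  classical
  have hne : h ≠ 0 := ne_of_gt hh
  -- basic J identities
  have skew : ∀ x y : H, ⟪x, J y⟫ = -⟪J x, y⟫ := by
    intro x y
    rw [← hJiso x (J y), hJ2, inner_neg_right]
  -- contraction against the basis
  have contr : ∀ (f : H →ₗ[ℝ] ℝ) (x : H), ∑ i, ⟪x, b i⟫ * f (b i) = f x := by
    intro f x
    conv_rhs => rw [← b.sum_repr x]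
    rw [map_sum]
    refine Finset.sum_congr rfl fun i _ => ?_
    rw [map_smul, smul_eq_mul, b.repr_apply_apply, real_inner_comm]
  have pairS : ∀ x y : H, ∑ i, ⟪x, b i⟫ * ⟪y, b i⟫ = ⟪x, y⟫ := by
    intro x y
    have hc : ∀ i : Fin (2*n), ⟪y, b i⟫ = ⟪b i, y⟫ := fun i => real_inner_comm _ _
    simp_rw [hc]
    exact b.sum_inner_mul_inner x y
  have riesz : ∀ f : H →ₗ[ℝ] ℝ, ∃ v : H, ∀ x, f x = ⟪v, x⟫ := by
    intro f
    refine ⟨∑ i, f (b i) • b i, fun x => ?_⟩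
    rw [← contr f x, sum_inner]
    refine Finset.sum_congr rfl fun i _ => ?_
    rw [real_inner_smul_left, real_inner_comm]
    ring
  -- J-invariance of contracted products
  have Jinv : ∀ f g : H →ₗ[ℝ] ℝ,
      ∑ i, f (J (b i)) * g (J (b i)) = ∑ i, f (b i) * g (b i) := by
    intro f g
    obtain ⟨vf, hf⟩ := riesz f
    obtain ⟨vg, hg⟩ := riesz g
    calc ∑ i, f (J (b i)) * g (J (b i))
        = ∑ i, ⟪J vf, b i⟫ * ⟪J vg, b i⟫ := by
          refine Finset.sum_congr rfl fun i _ => ?_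
          rw [hf, hg, skew, skew]; ring
      _ = ⟪J vf, J vg⟫ := pairS _ _
      _ = ⟪vf, vg⟫ := hJiso _ _
      _ = ∑ i, ⟪vf, b i⟫ * ⟪vg, b i⟫ := (pairS _ _).symm
      _ = ∑ i, f (b i) * g (b i) := by
          refine Finset.sum_congr rfl fun i _ => ?_
          rw [hf, hg]
  -- specific scalar sums
  have sumvv : ∑ i, ⟪V, b i⟫ * ⟪V, b i⟫ = ‖V‖^2 := by
    rw [pairS, real_inner_self_eq_norm_sq]
  have hJV : ∀ i, ⟪V, J (b i)⟫ = -⟪J V, b i⟫ := fun i => skew V (b i)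
  have sumww : ∑ i, ⟪V, J (b i)⟫ * ⟪V, J (b i)⟫ = ‖V‖^2 := by
    simp_rw [hJV, neg_mul_neg]
    rw [pairS, hJiso, real_inner_self_eq_norm_sq]
  have sumww' : ∑ i, (-⟪V, J (b i)⟫) * (-⟪V, J (b i)⟫) = ‖V‖^2 := by
    simp only [neg_mul_neg]; exact sumww
  have innerVJV : ⟪V, J V⟫ = 0 := by
    have h1 := skew V V
    have h2 : ⟪J V, V⟫ = ⟪V, J V⟫ := real_inner_comm _ _
    linarith
  have sumvw : ∑ i, ⟪V, b i⟫ * ⟪V, J (b i)⟫ = 0 := by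
    simp_rw [hJV, mul_neg]
    rw [Finset.sum_neg_distrib, pairS, innerVJV, neg_zero]
  have sumvw' : ∑ i, ⟪V, b i⟫ * (-⟪V, J (b i)⟫) = 0 := by
    simp only [mul_neg]
    rw [Finset.sum_neg_distrib, sumvw, neg_zero]
  -- contractions with D and E
  have cD : ∀ (x y : H), ∑ l, D y (b l) * ⟪x, b l⟫ = D y x := by
    intro x y
    rw [← contr (D y) x]
    exact Finset.sum_congr rfl fun l _ => mul_comm _ _
  have cDneg : ∀ y : H, ∑ l, D y (b l) * (-⟪V, J (b l)⟫) = D y (J V) := by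
    intro y
    have hr : ∀ l, -⟪V, J (b l)⟫ = ⟪J V, b l⟫ := fun l => by rw [hJV]; ring
    simp_rw [hr]
    exact cD (J V) y
  have cflip : ∀ (x y : H), ∑ i, ⟪x, b i⟫ * E (b i) y = E x y := by
    intro x y
    have := contr (E.flip y) x
    simpa using this
  have cEw : ∀ y : H, ∑ i, ⟪V, J (b i)⟫ * E (b i) y = -(E (J V) y) := by
    intro y
    simp_rw [hJV, neg_mul]
    rw [Finset.sum_neg_distrib, cflip]
  -- the per-j evaluation of the inner double sum
  have perj : ∀ j,
      (∑ i, ∑ l,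
        ((1/(2*h)) * (⟪V, b i⟫ * D (b j) (b l) + ⟪V, J (b i)⟫ * D (J (b j)) (b l))
          + (1/(2*h)) * (⟪V, b l⟫ * E (b i) (b j) - ⟪V, J (b l)⟫ * E (b i) (J (b j))))^2)
      = (1/(4*h^2)) * (‖V‖^2 * ((∑ l, D (b j) (b l) * D (b j) (b l))
            + (∑ l, D (J (b j)) (b l) * D (J (b j)) (b l))
            + (∑ i, E (b i) (b j) * E (b i) (b j))
            + (∑ i, E (b i) (J (b j)) * E (b i) (J (b j))))
          + 4 * (E V (b j) * D (b j) V)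
          + 2 * (E V (J (b j)) * D (b j) (J V))
          - 2 * (E (J V) (b j) * D (J (b j)) V)) := by
    intro j
    have e1 : (∑ i, ∑ l,
        ((1/(2*h)) * (⟪V, b i⟫ * D (b j) (b l) + ⟪V, J (b i)⟫ * D (J (b j)) (b l))
          + (1/(2*h)) * (⟪V, b l⟫ * E (b i) (b j) - ⟪V, J (b l)⟫ * E (b i) (J (b j))))^2)
        = (1/(4*h^2)) * ∑ i, ∑ l,
            (⟪V, b i⟫ * D (b j) (b l) + ⟪V, J (b i)⟫ * D (J (b j)) (b l)
              + E (b i) (b j) * ⟪V, b l⟫ + E (b i) (J (b j)) * (-⟪V, J (b l)⟫))^2 := by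
      rw [Finset.mul_sum]
      refine Finset.sum_congr rfl fun i _ => ?_
      rw [Finset.mul_sum]
      refine Finset.sum_congr rfl fun l _ => ?_
      field_simp
      ring
    rw [e1, gen_sum]
    rw [sumvv, sumww, sumww', sumvw, sumvw']
    rw [cD V (b j), cD V (J (b j)), cDneg (b j), cDneg (J (b j))]
    rw [cflip V (b j), cflip V (J (b j)), cEw (b j), cEw (J (b j))]
    rw [hEtype, hDtype]
    ring
  -- sums over j of the pieces
  have hB : ∑ j, ∑ l, D (J (b j)) (b l) * D (J (b j)) (b l)
      = ∑ j, ∑ l, D (b j) (b l) * D (b j) (b l) := by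
    rw [Finset.sum_comm]
    conv_rhs => rw [Finset.sum_comm]
    refine Finset.sum_congr rfl fun l _ => ?_
    have := Jinv (D.flip (b l)) (D.flip (b l))
    simpa using this
  have hC : ∑ j, ∑ i, E (b i) (b j) * E (b i) (b j)
      = ∑ i, ∑ j, E (b i) (b j) * E (b i) (b j) := Finset.sum_comm
  have hD4 : ∑ j, ∑ i, E (b i) (J (b j)) * E (b i) (J (b j))
      = ∑ i, ∑ j, E (b i) (b j) * E (b i) (b j) := by
    rw [Finset.sum_comm]
    refine Finset.sum_congr rfl fun i _ => ?_
    exact Jinv (E (b i)) (E (b i))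
  have hc1 : ∑ j, E V (b j) * D (b j) V = ∑ i, D V (b i) * E V (b i) := by
    refine Finset.sum_congr rfl fun j _ => ?_
    rw [hDsymm]; ring
  have hc2 : ∑ j, E V (J (b j)) * D (b j) (J V) = ∑ i, D V (b i) * E V (b i) := by
    have key := Jinv ((E V).comp J) (D.flip (J V))
    simp only [LinearMap.comp_apply, LinearMap.flip_apply, hJ2, map_neg, hDtype,
      neg_mul_neg] at key
    rw [← key]
    exact hc1
  have hc3 : ∑ j, E (J V) (b j) * D (J (b j)) V = -(∑ i, D V (b i) * E V (b i)) := by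
    have key := Jinv (E (J V)) ((D.flip V).comp J)
    simp only [LinearMap.comp_apply, LinearMap.flip_apply, hJ2, hEtype, map_neg,
      LinearMap.neg_apply, mul_neg, Finset.sum_neg_distrib] at key
    rw [← key, hc1]
  -- assemble
  have swap : (∑ i, ∑ j, ∑ l,
        ((1/(2*h)) * (⟪V, b i⟫ * D (b j) (b l) + ⟪V, J (b i)⟫ * D (J (b j)) (b l))
          + (1/(2*h)) * (⟪V, b l⟫ * E (b i) (b j) - ⟪V, J (b l)⟫ * E (b i) (J (b j))))^2)
      = ∑ j, ∑ i, ∑ l,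
        ((1/(2*h)) * (⟪V, b i⟫ * D (b j) (b l) + ⟪V, J (b i)⟫ * D (J (b j)) (b l))
          + (1/(2*h)) * (⟪V, b l⟫ * E (b i) (b j) - ⟪V, J (b l)⟫ * E (b i) (J (b j))))^2 :=
    Finset.sum_comm
  have total : (∑ j, ∑ i, ∑ l,
        ((1/(2*h)) * (⟪V, b i⟫ * D (b j) (b l) + ⟪V, J (b i)⟫ * D (J (b j)) (b l))
          + (1/(2*h)) * (⟪V, b l⟫ * E (b i) (b j) - ⟪V, J (b l)⟫ * E (b i) (J (b j))))^2)
      = (1/(4*h^2)) * (2 * ‖V‖^2 * ((∑ i, ∑ j, D (b i) (b j) * D (b i) (b j))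
            + (∑ i, ∑ j, E (b i) (b j) * E (b i) (b j)))
          + 8 * ∑ i, D V (b i) * E V (b i)) := by
    calc (∑ j, ∑ i, ∑ l,
        ((1/(2*h)) * (⟪V, b i⟫ * D (b j) (b l) + ⟪V, J (b i)⟫ * D (J (b j)) (b l))
          + (1/(2*h)) * (⟪V, b l⟫ * E (b i) (b j) - ⟪V, J (b l)⟫ * E (b i) (J (b j))))^2)
        = ∑ j, (1/(4*h^2)) * (‖V‖^2 * ((∑ l, D (b j) (b l) * D (b j) (b l))
            + (∑ l, D (J (b j)) (b l) * D (J (b j)) (b l))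
            + (∑ i, E (b i) (b j) * E (b i) (b j))
            + (∑ i, E (b i) (J (b j)) * E (b i) (J (b j))))
          + 4 * (E V (b j) * D (b j) V)
          + 2 * (E V (J (b j)) * D (b j) (J V))
          - 2 * (E (J V) (b j) * D (J (b j)) V)) :=
          Finset.sum_congr rfl fun j _ => perj j
      _ = (1/(4*h^2)) * ∑ j, (‖V‖^2 * ((∑ l, D (b j) (b l) * D (b j) (b l))
            + (∑ l, D (J (b j)) (b l) * D (J (b j)) (b l))
            + (∑ i, E (b i) (b j) * E (b i) (b j))
            + (∑ i, E (b i) (J (b j)) * E (b i) (J (b j))))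
          + 4 * (E V (b j) * D (b j) V)
          + 2 * (E V (J (b j)) * D (b j) (J V))
          - 2 * (E (J V) (b j) * D (J (b j)) V)) := by rw [Finset.mul_sum]
      _ = (1/(4*h^2)) * (2 * ‖V‖^2 * ((∑ i, ∑ j, D (b i) (b j) * D (b i) (b j))
            + (∑ i, ∑ j, E (b i) (b j) * E (b i) (b j)))
          + 8 * ∑ i, D V (b i) * E V (b i)) := by
        congr 1
        simp only [Finset.sum_add_distrib, Finset.sum_sub_distrib, ← Finset.mul_sum]
        rw [hB, hC, hD4, hc1, hc2, hc3]
        ring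
  rw [swap, total]
  have hsqD : (∑ i, ∑ j, (D (b i) (b j))^2) = ∑ i, ∑ j, D (b i) (b j) * D (b i) (b j) :=
    Finset.sum_congr rfl fun i _ => Finset.sum_congr rfl fun j _ => by ring
  have hsqE : (∑ i, ∑ j, (E (b i) (b j))^2) = ∑ i, ∑ j, E (b i) (b j) * E (b i) (b j) :=
    Finset.sum_congr rfl fun i _ => Finset.sum_congr rfl fun j _ => by ring
  rw [hsqD, hsqE]
  field_simp
  ring
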